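/- Let h ≥ k ≥ 1 be integers. There exists a polynomial z_{k,h}(t) ∈ ℤ[t], depending only on k and h, such that for every matroid M of rank k, every stressed hyperplane H of M with |H| = h, and the relaxation M̃ of M at H, one has Z_{M̃}(t) = Z_M(t) + z_{k,h}(t). -/

import Mathlib

open Polynomial Matroid

namespace KLPaper

variable {α : Type} [Fintype α]

/-- The contraction `M ⧸ C` of a set `C` in a matroid `M`, defined (as is standard,
see e.g. Oxley, Prop. 3.1.1) as the dual of the deletion of `C` from the dual matroid,
where deletion of `C` is restriction to `M.E \ C`.  Its ground set is `M.E \ C`. -/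
noncomputable def contract (M : Matroid α) (C : Set α) : Matroid α :=
  (M✶ ↾ (M.E \ C))✶

scoped infixl:75 " ⧸ " => KLPaper.contract

/-- The rank `rk M S` of a set `S` in a matroid `M`: the largest cardinality of an
independent subset of `S`. -/
noncomputable def rk (M : Matroid α) (S : Set α) : ℕ :=
  sSup {n | ∃ I, I ⊆ S ∧ M.Indep I ∧ I.ncard = n}

/-- The rank of a matroid: the rank of its ground set. -/
noncomputable def rank (M : Matroid α) : ℕ := rk M M.E

/-- A circuit of a matroid: a minimal dependent set, i.e. a dependent subset of the
ground set all of whose proper subsets are independent. -/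
def IsCircuit (M : Matroid α) (C : Set α) : Prop :=
  M.Dep C ∧ ∀ D ⊂ C, M.Indep D

/-- A hyperplane of a matroid: a maximal proper flat. -/
def IsHyperplane (M : Matroid α) (H : Set α) : Prop :=
  M.IsFlat H ∧ H ≠ M.E ∧ ∀ F, M.IsFlat F → H ⊂ F → F = M.E

/-- A stressed hyperplane of a matroid `M` of rank `k`: a hyperplane `H` such that every
`k`-element subset of `H` is a circuit of `M`. -/
def Stressed (M : Matroid α) (H : Set α) : Prop :=
  IsHyperplane M H ∧ ∀ C ⊆ H, C.ncard = rank M → IsCircuit M C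

/-- `Mt` is the relaxation of `M` at the stressed hyperplane `H`: the matroid on the same
ground set whose bases are exactly the bases of `M` together with all `(rank M)`-element
subsets of `H`. -/
def IsRelaxation (M Mt : Matroid α) (H : Set α) : Prop :=
  Mt.E = M.E ∧ ∀ B : Set α, Mt.IsBase B ↔ (M.IsBase B ∨ (B ⊆ H ∧ B.ncard = rank M))

/-- The characterization of the Kazhdan–Lusztig polynomials `P_M` and the `Z`-polynomials
`Z_M` of matroids (on a fixed finite type): (i) both equal `1` on matroids with empty
ground set; (ii) `2 · deg P_M < rk M` when the ground set is nonempty (the zero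
polynomial being allowed); (iii) `Z_M` is palindromic of degree `rk M`;
(iv) `Z_M = Σ_{S ⊆ E} t^{rk S} · P_{M ⧸ S}`, the sum over all subsets `S` of `E`. -/
def PZaxioms (P Z : Matroid α → Polynomial ℤ) : Prop :=
  (∀ M : Matroid α, M.E = ∅ → P M = 1 ∧ Z M = 1) ∧
  (∀ M : Matroid α, M.E ≠ ∅ → (P M = 0 ∨ 2 * (P M).natDegree < rank M)) ∧
  (∀ M : Matroid α, (Z M).natDegree ≤ rank M ∧
      ∀ i ≤ rank M, (Z M).coeff i = (Z M).coeff (rank M - i)) ∧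
  (∀ M : Matroid α,
      Z M = ∑ S ∈ M.E.toFinite.toFinset.powerset,
        X ^ (rk M (S : Set α)) * P (M ⧸ (S : Set α)))

end KLPaper

/-!
Write `Z_{M̃} - Z_M` as the sum over `S ⊆ E` of `t^{rk̃ S} P_{M̃/S} - t^{rk S} P_{M/S}`. A basis of a
set `S ⊄ H` is not contained in the flat `H`, so relaxing changes neither `rk S` nor `M/S`, and
only the sets `S ⊆ H` contribute. For `0 < |S| < k` the set `S` is independent and `M̃/S` is the
relaxation of `M/S` at the stressed hyperplane `H \ S`, with parameters `(k - |S|, h - |S|)`. For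
`|S| ≥ k` the minor `M̃/S` has rank `0`, while `M/S` has rank `1` and is loopless exactly when
`S = H`; a rank-one matroid has `P = 1` if it is loopless and `P = 0` otherwise, by palindromicity
of `Z` and induction on the number of loops. Hence, by induction on `k`,
`Z_{M̃} - Z_M = (P_{M̃} - P_M) + c_{k,h}` with `c_{k,h}` depending only on `k` and `h`. Finally
`P_{M̃} - P_M` depends only on `k` and `h` as well: two such differences differ by a polynomial of
degree `< k/2` whose coefficients are symmetric about `k/2`, which must vanish.
-/

open Set

namespace KLPaper

variable {α : Type}

theorem contract_eq (M : Matroid α) (C : Set α) : (M ⧸ C) = M ／ C := rfl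

section Rank

variable [Fintype α] {M : Matroid α} {B C I S : Set α}

theorem cast_rk (M : Matroid α) (S : Set α) : (rk M S : ℕ∞) = M.eRk S := by
  obtain ⟨I, hI⟩ := M.exists_isBasis' S
  have hle : ∀ n ∈ {n | ∃ J, J ⊆ S ∧ M.Indep J ∧ J.ncard = n}, n ≤ I.ncard := by
    rintro _ ⟨J, hJS, hJ, rfl⟩
    have := hJ.encard_le_eRk_of_subset hJS
    rw [← hI.encard_eq_eRk, ← (toFinite J).cast_ncard_eq, ← (toFinite I).cast_ncard_eq] at this
    exact_mod_cast this
  have hrk : rk M S = I.ncard :=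
    le_antisymm (csSup_le ⟨_, I, hI.subset, hI.indep, rfl⟩ hle)
      (le_csSup ⟨_, hle⟩ ⟨I, hI.subset, hI.indep, rfl⟩)
  rw [hrk, (toFinite I).cast_ncard_eq, hI.encard_eq_eRk]

theorem cast_rank (M : Matroid α) : (rank M : ℕ∞) = M.eRank := by
  rw [rank, cast_rk, eRk_ground]

theorem rk_mono (M : Matroid α) {S T : Set α} (h : S ⊆ T) : rk M S ≤ rk M T := by
  rw [← Nat.cast_le (α := ℕ∞), cast_rk, cast_rk]
  exact M.eRk_mono h

theorem rk_le_rank (M : Matroid α) (S : Set α) : rk M S ≤ rank M := by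
  rw [← Nat.cast_le (α := ℕ∞), cast_rk, cast_rank]
  exact M.eRk_le_eRank S

theorem rk_eq_ncard_of_indep (hI : M.Indep I) : rk M I = I.ncard := by
  rw [← Nat.cast_inj (R := ℕ∞), cast_rk, hI.eRk_eq_encard, (toFinite I).cast_ncard_eq]

theorem rk_eq_ncard_of_isBasis' (hI : M.IsBasis' I S) : rk M S = I.ncard := by
  rw [← Nat.cast_inj (R := ℕ∞), cast_rk, hI.eRk_eq_encard, (toFinite I).cast_ncard_eq]

theorem ncard_eq_rank_of_isBase (hB : M.IsBase B) : B.ncard = rank M := by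
  rw [← Nat.cast_inj (R := ℕ∞), cast_rank, (toFinite B).cast_ncard_eq, hB.encard_eq_eRank]

theorem rk_eq_zero_iff (hS : S ⊆ M.E) : rk M S = 0 ↔ S ⊆ M.loops := by
  rw [← Nat.cast_inj (R := ℕ∞), cast_rk, Nat.cast_zero, eRk_eq_zero_iff]

theorem ground_ne_empty_of_one_le_rank (h : 1 ≤ rank M) : M.E ≠ ∅ := by
  intro hE
  rw [rank, hE, rk_eq_ncard_of_indep M.empty_indep, ncard_empty] at h
  omega

theorem rank_contract_add_rk (hC : C ⊆ M.E) :
    rank (M ⧸ C) + rk M C = rank M := by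
  have h₁ := (M ／ C).eRank_add_eRank_dual
  have h₂ := M.eRk_dual_add_eRank (M.E \ C)
  rw [dual_contract, delete_eq_restrict, eRank_restrict, dual_ground, contract_ground] at h₁
  rw [sdiff_sdiff_cancel_left hC] at h₂
  rw [← contract_eq, ← cast_rank, ← cast_rk, ← (toFinite _).cast_ncard_eq] at h₁
  rw [← cast_rank, ← cast_rk, ← cast_rk, ← (toFinite _).cast_ncard_eq] at h₂
  norm_cast at h₁ h₂
  omega

theorem rank_contract_of_subset_loops (hS : S ⊆ M.loops) :
    rank (M ⧸ S) = rank M := by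
  have h := rank_contract_add_rk (hS.trans M.loops_subset_ground)
  rwa [(rk_eq_zero_iff (hS.trans M.loops_subset_ground)).2 hS, add_zero] at h

end Rank

theorem IsHyperplane.ground_ne_empty {M : Matroid α} {H : Set α} (hH : IsHyperplane M H) :
    M.E ≠ ∅ := fun hE =>
  hH.2.1 (by rw [hE]; exact subset_empty_iff.1 (hE ▸ hH.1.subset_ground))

theorem IsHyperplane.contract {M : Matroid α} {H S : Set α} (hH : IsHyperplane M H)
    (hSH : S ⊆ H) : IsHyperplane (M ⧸ S) (H \ S) := by
  obtain ⟨hflat, hne, hmax⟩ := hH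
  have hSE : S ⊆ M.E := hSH.trans hflat.subset_ground
  refine ⟨?_, fun h => hne ?_, fun F hF hHF => ?_⟩
  · rw [isFlat_iff_closure_eq, contract_eq, contract_closure_eq, sdiff_union_of_subset hSH,
      hflat.closure]
  · rw [← sdiff_union_of_subset hSH, h, contract_eq, contract_ground, sdiff_union_of_subset hSE]
  · have hFE : F ⊆ M.E \ S := hF.subset_ground
    have hFS : M.IsFlat (F ∪ S) := by
      have hcl := hF.closure
      rw [contract_eq, contract_closure_eq] at hcl
      rw [isFlat_iff_closure_eq]
      refine (subset_antisymm (fun e he => ?_) (M.subset_closure _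
        (union_subset (hFE.trans sdiff_subset) hSE)))
      by_cases heS : e ∈ S
      · exact Or.inr heS
      · exact Or.inl (hcl ▸ ⟨he, heS⟩)
    have hHFS : H ⊂ F ∪ S := by
      rw [← sdiff_union_of_subset hSH]
      obtain ⟨e, heF, heH⟩ := exists_of_ssubset hHF
      refine ssubset_of_subset_not_subset (union_subset_union_left S hHF.subset) fun h => ?_
      obtain (he | he) := h (Or.inl heF)
      · exact heH he
      · exact (hFE heF).2 he
    rw [contract_eq, contract_ground, ← hmax _ hFS hHFS, union_sdiff_right,
      sdiff_eq_left.2 (disjoint_of_subset_left hFE disjoint_sdiff_left)]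

section Stressed

variable {M : Matroid α} {H I S : Set α}

theorem Stressed.one_le_rank (hH : Stressed M H) : 1 ≤ rank M := by
  by_contra! h
  exact (hH.2 ∅ (empty_subset H) (by rw [ncard_empty]; omega)).1.not_indep M.empty_indep

theorem Stressed.not_indep_of_subset (hH : Stressed M H) (hIH : I ⊆ H) (hI : rank M ≤ I.ncard) :
    ¬ M.Indep I := fun hInd => by
  obtain ⟨C, hCI, hC⟩ := exists_subset_card_eq hI
  exact (hH.2 C (hCI.trans hIH) hC).1.not_indep (hInd.subset hCI)

theorem Stressed.indep_of_subset (hH : Stressed M H) (hHk : rank M ≤ H.ncard) (hIH : I ⊆ H)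
    (hI : I.ncard < rank M) : M.Indep I := by
  obtain ⟨C, hIC, hCH, hC⟩ := exists_subsuperset_card_eq hIH hI.le hHk
  exact (hH.2 C hCH hC).2 I (hIC.ssubset_of_ne (by rintro rfl; omega))

variable [Fintype α]

theorem Stressed.rk_eq_ncard (hH : Stressed M H) (hHk : rank M ≤ H.ncard) (hSH : S ⊆ H)
    (hS : S.ncard < rank M) : rk M S = S.ncard :=
  rk_eq_ncard_of_indep (hH.indep_of_subset hHk hSH hS)

theorem Stressed.rk_add_one_eq (hH : Stressed M H) (hSH : S ⊆ H) (hS : rank M ≤ S.ncard) :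
    rk M S + 1 = rank M := by
  obtain ⟨I, hI⟩ := M.exists_isBasis' S
  have hI_lt : I.ncard < rank M :=
    not_le.1 fun h => hH.not_indep_of_subset (hI.subset.trans hSH) h hI.indep
  obtain ⟨J, hJS, hJ⟩ := exists_subset_card_eq (show rank M - 1 ≤ S.ncard by omega)
  have hJ_rk : rk M J = rank M - 1 := by
    rw [hH.rk_eq_ncard (hS.trans (ncard_le_ncard hSH)) (hJS.trans hSH)
      (by have := hH.one_le_rank; omega), hJ]
  have := rk_mono M hJS
  rw [rk_eq_ncard_of_isBasis' hI] at this ⊢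
  omega

theorem Stressed.contract (hH : Stressed M H) (hHk : rank M ≤ H.ncard) (hSH : S ⊆ H)
    (hS : S.ncard < rank M) : Stressed (M ⧸ S) (H \ S) := by
  have hSi := hH.indep_of_subset hHk hSH hS
  have hrank := rank_contract_add_rk (hSH.trans hH.1.1.subset_ground)
  rw [hH.rk_eq_ncard hHk hSH hS] at hrank
  refine ⟨hH.1.contract hSH, fun C hCH hC => ⟨⟨fun hCi => ?_, ?_⟩, fun D hDC => ?_⟩⟩
  · rw [contract_eq, hSi.contract_indep_iff] at hCi
    refine hH.not_indep_of_subset (union_subset (hCH.trans sdiff_subset) hSH) ?_ hCi.2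
    rw [ncard_union_eq hCi.1]
    omega
  · exact hCH.trans (sdiff_subset_sdiff_left hH.1.1.subset_ground)
  · have hDS : Disjoint D S := disjoint_of_subset_left (hDC.subset.trans hCH) disjoint_sdiff_left
    rw [contract_eq, hSi.contract_indep_iff]
    refine ⟨hDS, hH.indep_of_subset hHk
      (union_subset (hDC.subset.trans (hCH.trans sdiff_subset)) hSH) ?_⟩
    rw [ncard_union_eq hDS]
    have := ncard_lt_ncard hDC
    omega

theorem Stressed.contract_loops_ne_empty (hH : Stressed M H) (hSH : S ⊆ H)
    (hS : rank M ≤ S.ncard) (hne : S ≠ H) : (M ⧸ S).loops ≠ ∅ := by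
  obtain ⟨e, heH, heS⟩ := exists_of_ssubset (hSH.ssubset_of_ne hne)
  obtain ⟨I, hIS, hI⟩ := exists_subset_card_eq (show rank M - 1 ≤ S.ncard by omega)
  have hk := hH.one_le_rank
  have hIi : M.Indep I :=
    hH.indep_of_subset (hS.trans (ncard_le_ncard hSH)) (hIS.trans hSH) (by omega)
  have hecl : e ∈ M.closure I := by
    by_contra hecl
    refine hH.not_indep_of_subset (insert_subset heH (hIS.trans hSH)) ?_
      (hIi.insert_indep_iff.2 (Or.inl ⟨hH.1.1.subset_ground heH, hecl⟩))
    rw [ncard_insert_of_notMem (fun heI => heS (hIS heI))]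
    omega
  rw [contract_eq, contract_loops_eq, ← nonempty_iff_ne_empty]
  exact ⟨e, M.closure_subset_closure hIS hecl, heS⟩

end Stressed

theorem contract_loops_eq_empty_of_isFlat {M : Matroid α} {F : Set α} (hF : M.IsFlat F) :
    (M ⧸ F).loops = ∅ := by
  rw [contract_eq, contract_loops_eq, hF.closure, sdiff_self]

theorem loops_contract_of_subset_loops {M : Matroid α} {S : Set α} (hS : S ⊆ M.loops) :
    (M ⧸ S).loops = M.loops \ S := by
  rw [contract_eq, contract_loops_eq, closure_eq_loops_of_subset hS]

theorem not_subset_of_isBasis_of_isFlat {M : Matroid α} {F I S : Set α} (hF : M.IsFlat F)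
    (hI : M.IsBasis I S) (hSF : ¬ S ⊆ F) : ¬ I ⊆ F := fun hIF =>
  hSF (hI.subset_closure.trans ((M.closure_subset_closure hIF).trans hF.closure.subset))

section Relaxation

variable {M Mt : Matroid α} {H I S B : Set α}

theorem IsRelaxation.isBase_of_isBase (hR : IsRelaxation M Mt H) (hB : M.IsBase B) :
    Mt.IsBase B :=
  (hR.2 B).2 (Or.inl hB)

theorem IsRelaxation.indep_of_indep (hR : IsRelaxation M Mt H) (hI : M.Indep I) : Mt.Indep I :=
  let ⟨_, hB, hIB⟩ := hI.exists_isBase_superset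
  (hR.isBase_of_isBase hB).indep.subset hIB

theorem IsRelaxation.indep_iff_of_not_subset (hR : IsRelaxation M Mt H) (hIH : ¬ I ⊆ H) :
    Mt.Indep I ↔ M.Indep I := by
  refine ⟨fun hI => ?_, hR.indep_of_indep⟩
  obtain ⟨B, hB, hIB⟩ := hI.exists_isBase_superset
  obtain hB | ⟨hBH, -⟩ := (hR.2 B).1 hB
  · exact hB.indep.subset hIB
  · exact absurd (hIB.trans hBH) hIH

theorem IsRelaxation.isBasis_of_not_subset (hR : IsRelaxation M Mt H) (hH : M.IsFlat H)
    (hI : M.IsBasis I S) (hSH : ¬ S ⊆ H) : Mt.IsBasis I S := by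
  have hIH := not_subset_of_isBasis_of_isFlat hH hI hSH
  refine (hR.indep_of_indep hI.indep).isBasis_of_maximal_subset hI.subset
    (fun J hJ hIJ hJS => ?_) (hR.1 ▸ hI.subset_ground)
  rw [hR.indep_iff_of_not_subset fun hJH => hIH (hIJ.trans hJH)] at hJ
  exact (hI.eq_of_subset_indep hJ hIJ hJS).symm.subset

theorem IsRelaxation.contract_eq_of_not_subset (hR : IsRelaxation M Mt H) (hH : M.IsFlat H)
    (hSE : S ⊆ M.E) (hSH : ¬ S ⊆ H) : (Mt ⧸ S) = M ⧸ S := by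
  obtain ⟨I, hI⟩ := M.exists_isBasis S hSE
  have hIH := not_subset_of_isBasis_of_isFlat hH hI hSH
  refine ext_indep (by rw [contract_eq, contract_eq, contract_ground, contract_ground, hR.1])
    fun J _ => ?_
  rw [contract_eq, contract_eq, (hR.isBasis_of_not_subset hH hI hSH).contract_indep_iff,
    hI.contract_indep_iff, hR.indep_iff_of_not_subset fun h => hIH (subset_union_right.trans h)]

theorem IsRelaxation.rank_eq [Fintype α] (hR : IsRelaxation M Mt H) : rank Mt = rank M := by
  obtain ⟨B, hB⟩ := M.exists_isBase
  rw [← ncard_eq_rank_of_isBase hB, ncard_eq_rank_of_isBase (hR.isBase_of_isBase hB)]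

theorem IsRelaxation.rk_eq_of_not_subset [Fintype α] (hR : IsRelaxation M Mt H)
    (hH : M.IsFlat H) (hSE : S ⊆ M.E) (hSH : ¬ S ⊆ H) : rk Mt S = rk M S := by
  obtain ⟨I, hI⟩ := M.exists_isBasis S hSE
  rw [rk_eq_ncard_of_isBasis' hI.isBasis',
    rk_eq_ncard_of_isBasis' (hR.isBasis_of_not_subset hH hI hSH).isBasis']

theorem IsRelaxation.rk_eq_rank [Fintype α] (hR : IsRelaxation M Mt H) (hSH : S ⊆ H)
    (hS : rank M ≤ S.ncard) : rk Mt S = rank M := by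
  obtain ⟨J, hJS, hJ⟩ := exists_subset_card_eq hS
  have hJB : Mt.IsBase J := (hR.2 J).2 (Or.inr ⟨hJS.trans hSH, hJ⟩)
  have h₁ := rk_mono Mt hJS
  have h₂ := rk_le_rank Mt S
  rw [rk_eq_ncard_of_indep hJB.indep, hJ] at h₁
  rw [hR.rank_eq] at h₂
  omega

theorem IsRelaxation.contract [Fintype α] (hR : IsRelaxation M Mt H) (hH : Stressed M H)
    (hHk : rank M ≤ H.ncard) (hSH : S ⊆ H) (hS : S.ncard < rank M) :
    IsRelaxation (M ⧸ S) (Mt ⧸ S) (H \ S) := by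
  have hSi := hH.indep_of_subset hHk hSH hS
  have hrank := rank_contract_add_rk (hSH.trans hH.1.1.subset_ground)
  rw [hH.rk_eq_ncard hHk hSH hS, contract_eq] at hrank
  refine ⟨by rw [contract_eq, contract_eq, contract_ground, contract_ground, hR.1], fun B => ?_⟩
  rw [contract_eq, contract_eq, (hR.indep_of_indep hSi).contract_isBase_iff,
    hSi.contract_isBase_iff, hR.2]
  constructor
  · rintro ⟨hB | ⟨hBH, hBc⟩, hBS⟩
    · exact Or.inl ⟨hB, hBS⟩
    · rw [ncard_union_eq hBS] at hBc
      exact Or.inr ⟨subset_sdiff.2 ⟨subset_union_left.trans hBH, hBS⟩, by omega⟩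
  · rintro (⟨hB, hBS⟩ | ⟨hBH, hBc⟩)
    · exact ⟨Or.inl hB, hBS⟩
    · have hBS : Disjoint B S := (subset_sdiff.1 hBH).2
      refine ⟨Or.inr ⟨union_subset (hBH.trans sdiff_subset) hSH, ?_⟩, hBS⟩
      rw [ncard_union_eq hBS]
      omega

end Relaxation

def CoeffSymm {R : Type*} [Semiring R] (k : ℕ) (f : R[X]) : Prop :=
  ∀ i ≤ k, f.coeff i = f.coeff (k - i)

theorem CoeffSymm.sub {R : Type*} [Ring R] {k : ℕ} {f g : R[X]} (hf : CoeffSymm k f)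
    (hg : CoeffSymm k g) : CoeffSymm k (f - g) := fun i hi => by
  rw [coeff_sub, coeff_sub, hf i hi, hg i hi]

theorem CoeffSymm.eq_zero {R : Type*} [Semiring R] {k : ℕ} {f : R[X]} (hf : CoeffSymm k f)
    (hdeg : 2 * f.natDegree < k) : f = 0 := by
  by_contra hne
  have h := hf f.natDegree (by omega)
  rw [coeff_eq_zero_of_natDegree_lt (by omega : f.natDegree < k - f.natDegree)] at h
  exact hne (leadingCoeff_eq_zero.1 h)

namespace PZaxioms

variable [Fintype α] {P Z : Matroid α → ℤ[X]} {M Mt N : Matroid α}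

theorem P_eq_zero_of_rank_eq_zero (ax : PZaxioms P Z) (hE : N.E ≠ ∅) (h : rank N = 0) :
    P N = 0 :=
  (ax.2.1 N hE).resolve_right (by omega)

theorem two_mul_natDegree_P_lt (ax : PZaxioms P Z) (h : 1 ≤ rank N) :
    2 * (P N).natDegree < rank N := by
  obtain hP | hP := ax.2.1 N (ground_ne_empty_of_one_le_rank h)
  · rw [hP, natDegree_zero]
    omega
  · exact hP

theorem P_eq_C_of_rank_eq_one (ax : PZaxioms P Z) (h : rank N = 1) :
    P N = C ((P N).coeff 0) :=
  eq_C_of_natDegree_eq_zero (by have := ax.two_mul_natDegree_P_lt h.ge; omega)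

theorem Z_eq_of_rank_eq_one (ax : PZaxioms P Z) (h : rank N = 1) :
    Z N = ∑ S ∈ N.loops.toFinite.toFinset.powerset, P (N ⧸ (S : Set α)) + X := by
  classical
  set E := N.E.toFinite.toFinset
  set L := N.loops.toFinite.toFinset
  have hsubE : ∀ {S : Finset α}, S ⊆ E ↔ (S : Set α) ⊆ N.E := Set.Finite.subset_toFinset
  have hsubL : ∀ {S : Finset α}, S ⊆ L ↔ (S : Set α) ⊆ N.loops := Set.Finite.subset_toFinset
  have hrk_one : ∀ S : Finset α, S ⊆ E → ¬ S ⊆ L → rk N S = 1 := fun S hSE hSL => by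
    have := rk_le_rank N S
    have := (rk_eq_zero_iff (hsubE.1 hSE)).not.2 (hsubL.not.1 hSL)
    omega
  have hEL : ¬ E ⊆ L := fun hEL => by
    have h0 := (rk_eq_zero_iff subset_rfl).2 (Set.Finite.toFinset_subset_toFinset.1 hEL)
    rw [← rank, h] at h0
    omega
  rw [ax.2.2.2 N, ← Finset.sum_subset (s₁ := insert E L.powerset), Finset.sum_insert
    fun hmem => hEL (Finset.mem_powerset.1 hmem), add_comm]
  · congr 1
    · refine Finset.sum_congr rfl fun S hS => ?_
      have hSL := hsubL.1 (Finset.mem_powerset.1 hS)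
      rw [(rk_eq_zero_iff (hSL.trans N.loops_subset_ground)).2 hSL, pow_zero, one_mul]
    · have hgr : (N ⧸ (E : Set α)).E = ∅ := by
        rw [contract_eq, contract_ground, Set.Finite.coe_toFinset, sdiff_self]
      rw [hrk_one E subset_rfl hEL, (ax.1 _ hgr).1, pow_one, mul_one]
  · exact Finset.insert_subset (Finset.mem_powerset_self E)
      (Finset.powerset_mono.2 (Set.Finite.toFinset_subset_toFinset.2 N.loops_subset_ground))
  · intro S hS hSn
    rw [Finset.mem_insert, Finset.mem_powerset, not_or] at hSn
    rw [Finset.mem_powerset] at hS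
    have hrk := hrk_one S hS hSn.2
    have hrank := rank_contract_add_rk (hsubE.1 hS)
    have hgr : (N ⧸ (S : Set α)).E ≠ ∅ := by
      rw [contract_eq, contract_ground, Ne, sdiff_eq_empty]
      refine fun hES => hSn.1 (Finset.coe_injective ?_)
      rw [Set.Finite.coe_toFinset]
      exact (hsubE.1 hS).antisymm hES
    rw [ax.P_eq_zero_of_rank_eq_zero hgr (by omega), mul_zero]

theorem sum_coeff_zero_P_contract (ax : PZaxioms P Z) (h : rank N = 1) :
    ∑ S ∈ N.loops.toFinite.toFinset.powerset, (P (N ⧸ (S : Set α))).coeff 0 = 1 := by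
  have hpal := (ax.2.2.1 N).2 0 (by omega)
  have hC : ∀ S ∈ N.loops.toFinite.toFinset.powerset,
      P (N ⧸ (S : Set α)) = C ((P (N ⧸ (S : Set α))).coeff 0) := fun S hS =>
    ax.P_eq_C_of_rank_eq_one ((rank_contract_of_subset_loops
      (Set.Finite.subset_toFinset.1 (Finset.mem_powerset.1 hS))).trans h)
  rw [h, Nat.sub_zero, ax.Z_eq_of_rank_eq_one h, Finset.sum_congr rfl hC] at hpal
  simpa only [coeff_add, finsetSum_coeff, coeff_C_zero, coeff_C, coeff_X_zero, coeff_X_one,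
    one_ne_zero, if_true, if_false, Finset.sum_const_zero, add_zero, zero_add] using hpal

theorem P_eq_of_rank_eq_one (ax : PZaxioms P Z) (h : rank N = 1) :
    P N = if N.loops = ∅ then 1 else 0 := by
  classical
  obtain ⟨n, hn⟩ : ∃ n, N.loops.ncard = n := ⟨_, rfl⟩
  induction n using Nat.strong_induction_on generalizing N with
  | _ n ih =>
  set L := N.loops.toFinite.toFinset
  have hcontract : ∀ S ∈ L.powerset.erase ∅,
      (P (N ⧸ (S : Set α))).coeff 0 = if S = L then 1 else 0 := by
    intro S hS
    obtain ⟨hne, hSL⟩ := Finset.mem_erase.1 hS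
    have hSL : (S : Set α) ⊆ N.loops := Set.Finite.subset_toFinset.1 (Finset.mem_powerset.1 hSL)
    have hlt : (N.loops \ S).ncard < n := by
      have := ncard_sdiff_add_ncard_of_subset hSL
      have := Finset.card_pos.2 (Finset.nonempty_iff_ne_empty.2 hne)
      rw [ncard_coe_finset] at *
      omega
    have hiff : N.loops \ S = ∅ ↔ S = L := by
      rw [sdiff_eq_empty, ← Finset.coe_inj, Set.Finite.coe_toFinset]
      exact ⟨hSL.antisymm, fun h => h.superset⟩
    rw [ih _ hlt ((rank_contract_of_subset_loops hSL).trans h)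
      (by rw [loops_contract_of_subset_loops hSL]), loops_contract_of_subset_loops hSL]
    split_ifs <;> simp_all
  have hsum := ax.sum_coeff_zero_P_contract h
  rw [← Finset.add_sum_erase _ _ (Finset.empty_mem_powerset L), Finset.coe_empty, contract_eq,
    contract_empty, Finset.sum_congr rfl hcontract, Finset.sum_ite_eq'] at hsum
  have hiff : L ∈ L.powerset.erase ∅ ↔ ¬ N.loops = ∅ := by
    simp [L]
  rw [ax.P_eq_C_of_rank_eq_one h]
  split_ifs at hsum ⊢ <;> simp_all

theorem coeffSymm_Z_sub (ax : PZaxioms P Z) (h : rank Mt = rank M) :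
    CoeffSymm (rank M) (Z Mt - Z M) :=
  .sub (h ▸ (ax.2.2.1 Mt).2) (ax.2.2.1 M).2

theorem two_mul_natDegree_P_sub_lt (ax : PZaxioms P Z) (hk : 1 ≤ rank M)
    (h : rank Mt = rank M) : 2 * (P Mt - P M).natDegree < rank M := by
  have := natDegree_sub_le (P Mt) (P M)
  have := ax.two_mul_natDegree_P_lt (N := Mt) (h ▸ hk)
  have := ax.two_mul_natDegree_P_lt hk
  omega

end PZaxioms

def IsPRelaxationDiff (k h : ℕ) (p : ℤ[X]) : Prop :=
  ∀ (β : Type) [Fintype β] (P Z : Matroid β → ℤ[X]), PZaxioms P Z →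
    ∀ (M Mt : Matroid β) (H : Set β), rank M = k → Stressed M H → H.ncard = h →
      IsRelaxation M Mt H → P Mt = P M + p

/-- Here `p j` stands for the change of `P` under relaxations with parameters `(k - j, h - j)`. -/
noncomputable def relaxationCorrection (k h : ℕ) (p : ℕ → ℤ[X]) : ℤ[X] :=
  ∑ j ∈ Finset.Icc 1 (k - 1), h.choose j • (X ^ j * p j) - X ^ (k - 1)

section ZDifference

variable [Fintype α] {P Z : Matroid α → ℤ[X]} {M Mt : Matroid α} {H S : Set α}

theorem IsRelaxation.P_contract_of_rank_le_ncard (hR : IsRelaxation M Mt H) (ax : PZaxioms P Z)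
    (hH : Stressed M H) (hSH : S ⊆ H) (hS : rank M ≤ S.ncard) :
    P (Mt ⧸ S) = 0 ∧ P (M ⧸ S) = if S = H then 1 else 0 := by
  have hSE : S ⊆ M.E := hSH.trans hH.1.1.subset_ground
  have hgr : (M ⧸ S).E ≠ ∅ := (hH.1.contract hSH).ground_ne_empty
  constructor
  · have h := rank_contract_add_rk (M := Mt) (hR.1 ▸ hSE)
    rw [hR.rk_eq_rank hSH hS, hR.rank_eq] at h
    exact ax.P_eq_zero_of_rank_eq_zero (by rwa [contract_eq, contract_ground, hR.1]) (by omega)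
  · have h := rank_contract_add_rk hSE
    have := hH.rk_add_one_eq hSH hS
    rw [ax.P_eq_of_rank_eq_one (by omega)]
    split_ifs with hloops hSH' hSH'
    · rfl
    · exact absurd hloops (hH.contract_loops_ne_empty hSH hS hSH')
    · exact absurd (hSH' ▸ contract_loops_eq_empty_of_isFlat hH.1.1) hloops
    · rfl

theorem IsRelaxation.Z_summand_sub (hR : IsRelaxation M Mt H) (ax : PZaxioms P Z)
    (hH : Stressed M H) (hHk : rank M ≤ H.ncard) {p : ℕ → ℤ[X]}
    (hp : ∀ j ∈ Finset.Icc 1 (rank M - 1), IsPRelaxationDiff (rank M - j) (H.ncard - j) (p j))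
    (hSH : S ⊆ H) :
    X ^ rk Mt S * P (Mt ⧸ S) - X ^ rk M S * P (M ⧸ S) =
      (if S = ∅ then P Mt - P M else 0) +
        (if S.ncard ∈ Finset.Icc 1 (rank M - 1) then X ^ S.ncard * p S.ncard else 0) -
        (if S = H then X ^ (rank M - 1) else 0) := by
  have hk := hH.one_le_rank
  obtain rfl | hne := S.eq_empty_or_nonempty
  · have hH0 : (∅ : Set α) ≠ H := by
      rintro rfl
      rw [ncard_empty] at hHk
      omega
    simp [contract_eq, hH0, rk_eq_ncard_of_indep M.empty_indep,
      rk_eq_ncard_of_indep Mt.empty_indep]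
  obtain hlt | hle := lt_or_ge S.ncard (rank M)
  · have h1 : 1 ≤ S.ncard := (ncard_pos).2 hne
    have hSi := hH.indep_of_subset hHk hSH hlt
    have hrank := rank_contract_add_rk (hSH.trans hH.1.1.subset_ground)
    rw [hH.rk_eq_ncard hHk hSH hlt] at hrank
    have hj : S.ncard ∈ Finset.Icc 1 (rank M - 1) := Finset.mem_Icc.2 ⟨h1, by omega⟩
    rw [hp S.ncard hj α P Z ax (M ⧸ S) (Mt ⧸ S) (H \ S) (by omega) (hH.contract hHk hSH hlt)
      (ncard_sdiff hSH) (hR.contract hH hHk hSH hlt), rk_eq_ncard_of_indep hSi,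
      rk_eq_ncard_of_indep (hR.indep_of_indep hSi), if_neg hne.ne_empty, if_pos hj,
      if_neg (by rintro rfl; omega)]
    ring
  · obtain ⟨hPt, hP⟩ := hR.P_contract_of_rank_le_ncard ax hH hSH hle
    have hrk := hH.rk_add_one_eq hSH hle
    rw [hPt, hP, if_neg hne.ne_empty,
      if_neg (show S.ncard ∉ Finset.Icc 1 (rank M - 1) by rw [Finset.mem_Icc]; omega),
      show rk M S = rank M - 1 by omega]
    split_ifs <;> ring

theorem IsRelaxation.Z_sub (hR : IsRelaxation M Mt H) (ax : PZaxioms P Z) (hH : Stressed M H)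
    (hHk : rank M ≤ H.ncard) {p : ℕ → ℤ[X]}
    (hp : ∀ j ∈ Finset.Icc 1 (rank M - 1), IsPRelaxationDiff (rank M - j) (H.ncard - j) (p j)) :
    Z Mt - Z M = P Mt - P M + relaxationCorrection (rank M) H.ncard p := by
  classical
  set E := M.E.toFinite.toFinset
  set Hf := H.toFinite.toFinset
  have hHf : (Hf : Set α) = H := Set.Finite.coe_toFinset _
  have hEt : Mt.E.toFinite.toFinset = E := Set.Finite.toFinset_inj.2 hR.1
  calc Z Mt - Z M
      = ∑ S ∈ E.powerset,
          (X ^ rk Mt S * P (Mt ⧸ (S : Set α)) - X ^ rk M S * P (M ⧸ (S : Set α))) := by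
        rw [ax.2.2.2, ax.2.2.2, hEt, ← Finset.sum_sub_distrib]
    _ = ∑ S ∈ Hf.powerset,
          (X ^ rk Mt S * P (Mt ⧸ (S : Set α)) - X ^ rk M S * P (M ⧸ (S : Set α))) := by
        refine (Finset.sum_subset (Finset.powerset_mono.2
          (Set.Finite.toFinset_subset_toFinset.2 hH.1.1.subset_ground)) fun S hSE hSH => ?_).symm
        rw [Finset.mem_powerset, Set.Finite.subset_toFinset] at hSE hSH
        rw [hR.rk_eq_of_not_subset hH.1.1 hSE hSH, hR.contract_eq_of_not_subset hH.1.1 hSE hSH,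
          sub_self]
    _ = ∑ S ∈ Hf.powerset, ((if S = ∅ then P Mt - P M else 0) +
          (if S.card ∈ Finset.Icc 1 (rank M - 1) then X ^ S.card * p S.card else 0) -
          (if S = Hf then X ^ (rank M - 1) else 0)) := by
        refine Finset.sum_congr rfl fun S hS => ?_
        rw [Finset.mem_powerset, Set.Finite.subset_toFinset] at hS
        rw [hR.Z_summand_sub ax hH hHk hp hS, ncard_coe_finset, ← hHf]
        simp only [Finset.coe_inj, Finset.coe_eq_empty]
    _ = _ := by
        rw [Finset.sum_sub_distrib, Finset.sum_add_distrib, Finset.sum_ite_eq',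
          Finset.sum_ite_eq', if_pos (Finset.empty_mem_powerset Hf),
          if_pos (Finset.mem_powerset_self Hf), Finset.sum_powerset_apply_card
          (fun j => if j ∈ Finset.Icc 1 (rank M - 1) then X ^ j * p j else 0)]
        simp only [smul_ite, smul_zero]
        rw [Finset.sum_ite_mem, Finset.inter_eq_right.2, ← ncard_eq_toFinset_card H,
          relaxationCorrection]
        · ring
        · intro j hj
          rw [Finset.mem_Icc] at hj
          rw [Finset.mem_range, ← ncard_eq_toFinset_card H]
          omega

end ZDifference

theorem exists_isPRelaxationDiff_of_forall_Z_sub {k h : ℕ} (Q : ℤ[X])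
    (hQ : ∀ (β : Type) [Fintype β] (P Z : Matroid β → ℤ[X]), PZaxioms P Z →
      ∀ (M Mt : Matroid β) (H : Set β), rank M = k → Stressed M H → H.ncard = h →
        IsRelaxation M Mt H → Z Mt - Z M = P Mt - P M + Q) :
    ∃ p, IsPRelaxationDiff k h p := by
  by_cases hinst : ∃ (β : Type) (_ : Fintype β) (P Z : Matroid β → ℤ[X]) (_ : PZaxioms P Z)
      (M Mt : Matroid β) (H : Set β), rank M = k ∧ Stressed M H ∧ H.ncard = h ∧ IsRelaxation M Mt H
  · obtain ⟨β₀, _, P₀, Z₀, ax₀, M₀, Mt₀, H₀, hk₀, hH₀, hh₀, hR₀⟩ := hinst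
    refine ⟨P₀ Mt₀ - P₀ M₀, fun β _ P Z ax M Mt H hk hH hh hR => ?_⟩
    have hZ := hQ β P Z ax M Mt H hk hH hh hR
    have hZ₀ := hQ β₀ P₀ Z₀ ax₀ M₀ Mt₀ H₀ hk₀ hH₀ hh₀ hR₀
    have hsymm : CoeffSymm k ((P Mt - P M) - (P₀ Mt₀ - P₀ M₀)) := by
      rw [show (P Mt - P M) - (P₀ Mt₀ - P₀ M₀) = (Z Mt - Z M) - (Z₀ Mt₀ - Z₀ M₀) by
        rw [hZ, hZ₀]; ring]
      exact (hk ▸ ax.coeffSymm_Z_sub hR.rank_eq).sub (hk₀ ▸ ax₀.coeffSymm_Z_sub hR₀.rank_eq)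
    have hdeg : 2 * ((P Mt - P M) - (P₀ Mt₀ - P₀ M₀)).natDegree < k := by
      have := natDegree_sub_le (P Mt - P M) (P₀ Mt₀ - P₀ M₀)
      have := ax.two_mul_natDegree_P_sub_lt hH.one_le_rank hR.rank_eq
      have := ax₀.two_mul_natDegree_P_sub_lt hH₀.one_le_rank hR₀.rank_eq
      omega
    linear_combination sub_eq_zero.1 (hsymm.eq_zero hdeg)
  · exact ⟨0, fun β _ P Z ax M Mt H hk hH hh hR =>
      absurd ⟨β, _, P, Z, ax, M, Mt, H, hk, hH, hh, hR⟩ hinst⟩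

theorem exists_isPRelaxationDiff (k : ℕ) : ∀ h, k ≤ h → ∃ p, IsPRelaxationDiff k h p := by
  induction k using Nat.strong_induction_on with
  | _ k ih =>
  intro h hkh
  have hsmaller : ∀ j, ∃ p,
      j ∈ Finset.Icc 1 (k - 1) → IsPRelaxationDiff (k - j) (h - j) p := by
    intro j
    by_cases hj : j ∈ Finset.Icc 1 (k - 1)
    · rw [Finset.mem_Icc] at hj
      obtain ⟨p, hp⟩ := ih (k - j) (by omega) (h - j) (by omega)
      exact ⟨p, fun _ => hp⟩
    · exact ⟨0, fun hj' => absurd hj' hj⟩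
  choose p hp using hsmaller
  refine exists_isPRelaxationDiff_of_forall_Z_sub (relaxationCorrection k h p)
    fun β _ P Z ax M Mt H hk hH hh hR => ?_
  have hZ := hR.Z_sub ax hH (by omega) (p := p) (by rw [hk, hh]; exact hp)
  rwa [hk, hh] at hZ

theorem relaxation_Z_polynomial_general (k h : ℕ) (hkh : k ≤ h) :
    ∃ z : Polynomial ℤ,
      ∀ (β : Type) [Fintype β],
        ∀ (P Z : Matroid β → Polynomial ℤ), PZaxioms P Z →
          ∀ (M Mt : Matroid β) (H : Set β),
            rank M = k → Stressed M H → H.ncard = h → IsRelaxation M Mt H →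
            Z Mt = Z M + z := by
  obtain ⟨p₀, hp₀⟩ := exists_isPRelaxationDiff k h hkh
  choose p hp using fun j => exists_isPRelaxationDiff (k - j) (h - j) (by omega)
  refine ⟨p₀ + relaxationCorrection k h p, fun β _ P Z ax M Mt H hk hH hh hR => ?_⟩
  have hZ := hR.Z_sub ax hH (by omega) (p := p) (by rw [hk, hh]; exact fun j _ => hp j)
  rw [hk, hh, hp₀ β P Z ax M Mt H hk hH hh hR] at hZ
  linear_combination hZ

/-- For integers `h ≥ k ≥ 1` there is a polynomial `z_{k,h}(t) ∈ ℤ[t]`,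
depending only on `k` and `h`, such that for every matroid `M` of rank `k`, every
stressed hyperplane `H` of `M` with `|H| = h`, and the relaxation `M̃` of `M` at `H`,
one has `Z_{M̃}(t) = Z_M(t) + z_{k,h}(t)`. -/
theorem relaxation_Z_polynomial (k h : ℕ) (hk : 1 ≤ k) (hkh : k ≤ h) :
    ∃ z : Polynomial ℤ,
      ∀ (β : Type) [Fintype β],
        ∀ (P Z : Matroid β → Polynomial ℤ), PZaxioms P Z →
          ∀ (M Mt : Matroid β) (H : Set β),
            rank M = k → Stressed M H → H.ncard = h → IsRelaxation M Mt H →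
            Z Mt = Z M + z :=
  relaxation_Z_polynomial_general k h hkh

end KLPaper
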